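/- Let α be a real number with 4/3 < α < 5/3, let p, q, r be integers with p ≠ 0, and define V(n) = p⌊nα⌋ + qn + r for n ≥ 1. Then neither (V(1), V(2), V(3)) nor (V(2), V(3), V(4)) is an arithmetic progression; that is, V(1) + V(3) ≠ 2·V(2) and V(2) + V(4) ≠ 2·V(3). -/
import Mathlib


/-- If `4/3 < α < 5/3`, `p ≠ 0` and `V(n) = p⌊nα⌋ + qn + r`, then neither
`(V(1), V(2), V(3))` nor `(V(2), V(3), V(4))` is an arithmetic progression. -/
theorem gbs_no_arithmetic_triple (α : ℝ) (h1 : 4 / 3 < α) (h2 : α < 5 / 3)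
    (p q r : ℤ) (hp : p ≠ 0) (V : ℕ → ℤ)
    (hV : ∀ n : ℕ, 1 ≤ n → V n = p * ⌊(n : ℝ) * α⌋ + q * n + r) :
    V 1 + V 3 ≠ 2 * V 2 ∧ V 2 + V 4 ≠ 2 * V 3 := by
  have e1 := hV 1 (by norm_num)
  have e2 := hV 2 (by norm_num)
  have e3 := hV 3 (by norm_num)
  have e4 := hV 4 (by norm_num)
  push_cast at e1 e2 e3 e4
  have f1 : ⌊(1 : ℝ) * α⌋ = 1 := by
    rw [Int.floor_eq_iff]
    constructor <;> push_cast <;> linarith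
  have f3 : ⌊(3 : ℝ) * α⌋ = 4 := by
    rw [Int.floor_eq_iff]
    constructor <;> push_cast <;> linarith
  constructor
  · intro h
    rw [e1, e2, e3, f1, f3] at h
    have h0 : p * (2 * ⌊(2 : ℝ) * α⌋ - 5) = 0 := by linear_combination -h
    rcases mul_eq_zero.mp h0 with h' | h'
    · exact hp h'
    · omega
  · intro h
    rw [e2, e3, e4] at h
    rcases lt_or_ge α (3 / 2) with hc | hc
    · have f2 : ⌊(2 : ℝ) * α⌋ = 2 := by
        rw [Int.floor_eq_iff]
        constructor <;> push_cast <;> linarith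
      have f4 : ⌊(4 : ℝ) * α⌋ = 5 := by
        rw [Int.floor_eq_iff]
        constructor <;> push_cast <;> linarith
      rw [f2, f3, f4] at h
      apply hp
      linarith
    · have f2 : ⌊(2 : ℝ) * α⌋ = 3 := by
        rw [Int.floor_eq_iff]
        constructor <;> push_cast <;> linarith
      have f4 : ⌊(4 : ℝ) * α⌋ = 6 := by
        rw [Int.floor_eq_iff]
        constructor <;> push_cast <;> linarith
      rw [f2, f3, f4] at h
      apply hp
      linarith
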